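/- arXiv:1810.09922 — 7 statements merged into one kernel-verified Lean document; each statement's English description precedes it below -/
import Mathlib

section
/- Let Y be a compact, locally connected metric space. Suppose a family F of continuous self-maps of Y is not equicontinuous at a point y0, and h : Y → Y is a continuous map such that for every y ∈ Y, the supremum of diameters of connected components of h⁻¹(B(y,ε)) tends to 0 as ε → 0. Then the family {h ∘ f : f ∈ F} is not equicontinuous at y0. -/
open Metric Set


/-- If a family `F` of continuous self-maps of a compact, locally connected
metric space `Y` is not equicontinuous at `y0`, and `h : Y → Y` is continuous such that for
every `y` the diameters of connected components of `h ⁻¹' B(y, ε)` tend to `0` uniformly as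
`ε → 0`, then the family `{h ∘ f : f ∈ F}` is not equicontinuous at `y0`. -/
theorem stmt0 {Y : Type*} [MetricSpace Y] [CompactSpace Y] [LocallyConnectedSpace Y]
    (F : Set (Y → Y)) (hF : ∀ f ∈ F, Continuous f)
    (y0 : Y) (hne : ¬ EquicontinuousAt (fun f : F => (f : Y → Y)) y0)
    (h : Y → Y) (hc : Continuous h)
    (hdiam : ∀ y : Y, ∀ δ > (0 : ℝ), ∃ ε > (0 : ℝ),
      ∀ x ∈ h ⁻¹' Metric.ball y ε,
        Metric.diam (connectedComponentIn (h ⁻¹' Metric.ball y ε) x) ≤ δ) :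
    ¬ EquicontinuousAt (fun f : F => h ∘ (f : Y → Y)) y0 := by
  intro hEq
  apply hne
  rw [Metric.equicontinuousAt_iff] at hEq ⊢
  intro ε hε
  have hbd : ∀ s : Set Y, Bornology.IsBounded s := fun s =>
    (isCompact_univ.isBounded).subset (subset_univ _)
  obtain ⟨ε₀, hε₀, hunif⟩ : ∃ ε₀ > 0, ∀ (y x : Y), x ∈ h ⁻¹' ball y ε₀ →
      Metric.diam (connectedComponentIn (h ⁻¹' ball y ε₀) x) ≤ ε / 2 := by
    have key := fun y => hdiam y (ε / 2) (by positivity)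
    choose e he hd' using key
    have hcover : (univ : Set Y) ⊆ ⋃ y : Y, ball y (e y / 2) := fun x _ =>
      mem_iUnion.2 ⟨x, mem_ball_self (half_pos (he x))⟩
    obtain ⟨t, ht⟩ := isCompact_univ.elim_finite_subcover _ (fun y : Y => isOpen_ball) hcover
    have htne : t.Nonempty := by
      by_contra hemp
      rw [Finset.not_nonempty_iff_eq_empty] at hemp
      have := ht (mem_univ y0)
      simp [hemp] at this
    refine ⟨t.inf' htne (fun i => e i / 2),
      (Finset.lt_inf'_iff htne).2 fun i _ => half_pos (he i), fun y x hx => ?_⟩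
    set ε₀ := t.inf' htne (fun i => e i / 2) with hε₀def
    obtain ⟨i, hit, hyi⟩ : ∃ i ∈ t, y ∈ ball i (e i / 2) := by
      have := ht (mem_univ y); simpa using this
    have hsub : ball y ε₀ ⊆ ball i (e i) := by
      intro z hz
      rw [mem_ball] at *
      calc dist z i ≤ dist z y + dist y i := dist_triangle _ _ _
        _ < ε₀ + e i / 2 := by gcongr
        _ ≤ e i / 2 + e i / 2 := by gcongr; exact Finset.inf'_le _ hit
        _ = e i := by ring
    have hsub' : h ⁻¹' ball y ε₀ ⊆ h ⁻¹' ball i (e i) := preimage_mono hsub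
    calc Metric.diam (connectedComponentIn (h ⁻¹' ball y ε₀) x)
        ≤ Metric.diam (connectedComponentIn (h ⁻¹' ball i (e i)) x) :=
          Metric.diam_mono (connectedComponentIn_mono x hsub') (hbd _)
      _ ≤ ε / 2 := hd' i x (hsub' hx)
  obtain ⟨δ₁, hδ₁, hd⟩ := hEq ε₀ hε₀
  set V := connectedComponentIn (ball y0 δ₁) y0 with hV
  have hVopen : IsOpen V := (isOpen_ball).connectedComponentIn
  have hy0V : y0 ∈ V := mem_connectedComponentIn (mem_ball_self hδ₁)
  obtain ⟨δ₂, hδ₂, hballV⟩ := Metric.isOpen_iff.1 hVopen y0 hy0V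
  refine ⟨δ₂, hδ₂, fun z hz f => ?_⟩
  have hzV : z ∈ V := hballV (by simpa [mem_ball] using hz)
  have hVball : V ⊆ ball y0 δ₁ := connectedComponentIn_subset _ _
  set S := h ⁻¹' ball (h ((f : Y → Y) y0)) ε₀ with hS
  have himg : (f : Y → Y) '' V ⊆ S := by
    rintro _ ⟨w, hwV, rfl⟩
    have hw : dist w y0 < δ₁ := by simpa [mem_ball] using hVball hwV
    have h3 := hd w hw f
    show h ((f : Y → Y) w) ∈ ball (h ((f : Y → Y) y0)) ε₀
    rw [mem_ball, dist_comm]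
    exact h3
  have hpre : IsPreconnected ((f : Y → Y) '' V) :=
    (isPreconnected_connectedComponentIn).image _ ((hF f f.2).continuousOn)
  have hsubcc : (f : Y → Y) '' V ⊆ connectedComponentIn S ((f : Y → Y) y0) :=
    hpre.subset_connectedComponentIn ⟨y0, hy0V, rfl⟩ himg
  have h1 : (f : Y → Y) y0 ∈ connectedComponentIn S ((f : Y → Y) y0) :=
    hsubcc ⟨y0, hy0V, rfl⟩
  have h2 : (f : Y → Y) z ∈ connectedComponentIn S ((f : Y → Y) y0) :=
    hsubcc ⟨z, hzV, rfl⟩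
  calc dist ((f : Y → Y) y0) ((f : Y → Y) z)
      ≤ Metric.diam (connectedComponentIn S ((f : Y → Y) y0)) :=
        Metric.dist_le_diam_of_mem (hbd _) h1 h2
    _ ≤ ε / 2 := hunif _ _ (mem_ball_self hε₀)
    _ < ε := by linarith
end

section
/- Let Y be a compact metric space and M a Markov operator on C(Y). Then the family {(M*)ⁿ : M₁(Y) → M₁(Y)}_{n∈ℕ} is equicontinuous on all of M₁(Y) (with the weak*-metric d₀) if and only if the restricted family {(M*)ⁿ|_Y : Y → M₁(Y)}_{n∈ℕ} (identifying y with the Dirac measure δ_y) is equicontinuous at every point of Y. -/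
open scoped ComplexOrder

/-- The function `t ↦ t / (1 + t)` used in the definition of the metric `d₀`. -/
noncomputable def gfun (t : ℝ) : ℝ := t / (1 + t)

lemma gfun_nonneg {t : ℝ} (ht : 0 ≤ t) : 0 ≤ gfun t := div_nonneg ht (by linarith)

lemma gfun_le_one {t : ℝ} (ht : 0 ≤ t) : gfun t ≤ 1 := by
  rw [gfun, div_le_one (by linarith)]; linarith

lemma gfun_le_self {t : ℝ} (ht : 0 ≤ t) : gfun t ≤ t := by
  rw [gfun, div_le_iff₀ (by linarith)]; nlinarith

lemma gfun_mono {s t : ℝ} (hs : 0 ≤ s) (hst : s ≤ t) : gfun s ≤ gfun t := by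
  rw [gfun, gfun, div_le_div_iff₀ (by linarith) (by linarith)]; nlinarith

lemma gfun_pos {t : ℝ} (ht : 0 < t) : 0 < gfun t := div_pos ht (by linarith)

lemma lt_of_gfun_lt {s t : ℝ} (ht : 0 ≤ t) (h : gfun s < gfun t) : s < t := by
  by_contra hc
  push_neg at hc
  exact absurd (gfun_mono ht hc) (not_le.2 h)

lemma summable_d (f : ℕ → ℝ) (hf : ∀ k, 0 ≤ f k) :
    Summable (fun k => (1/2:ℝ)^k * gfun (f k)) := by
  refine Summable.of_nonneg_of_le
    (fun k => mul_nonneg (by positivity) (gfun_nonneg (hf k))) (fun k => ?_)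
    summable_geometric_two
  calc (1/2:ℝ)^k * gfun (f k) ≤ (1/2:ℝ)^k * 1 :=
        mul_le_mul_of_nonneg_left (gfun_le_one (hf k)) (by positivity)
    _ = (1/2:ℝ)^k := mul_one _

lemma term_le_d (f : ℕ → ℝ) (hf : ∀ k, 0 ≤ f k) (k : ℕ) :
    (1/2:ℝ)^k * gfun (f k) ≤ ∑' j, (1/2:ℝ)^j * gfun (f j) :=
  Summable.le_tsum (summable_d f hf) k (fun j _ => mul_nonneg (by positivity) (gfun_nonneg (hf j)))

lemma d_tsum_le (f : ℕ → ℝ) (hf : ∀ k, 0 ≤ f k) (K : ℕ) :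
    (∑' k, (1/2:ℝ)^k * gfun (f k)) ≤
      (∑ k ∈ Finset.range K, (1/2:ℝ)^k * gfun (f k)) + 2 * (1/2:ℝ)^K := by
  rw [← Summable.sum_add_tsum_nat_add K (summable_d f hf)]
  gcongr
  have h1 : Summable (fun k => (1/2:ℝ)^(k+K) * gfun (f (k+K))) :=
    (summable_nat_add_iff K).2 (summable_d f hf)
  have h2 : Summable (fun k : ℕ => (1/2:ℝ)^(k+K)) := by
    simp only [pow_add]
    exact summable_geometric_two.mul_right _
  have h4 : (∑' k : ℕ, (1/2:ℝ)^(k+K)) = 2 * (1/2:ℝ)^K := by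
    have h3 : ∀ k : ℕ, (1/2:ℝ)^(k+K) = (1/2:ℝ)^k * (1/2:ℝ)^K := fun k => pow_add _ _ _
    rw [tsum_congr h3, tsum_mul_right, tsum_geometric_two]
  rw [← h4]
  refine Summable.tsum_le_tsum (fun k => ?_) h1 h2
  calc (1/2:ℝ)^(k+K) * gfun (f (k+K)) ≤ (1/2:ℝ)^(k+K) * 1 :=
        mul_le_mul_of_nonneg_left (gfun_le_one (hf _)) (by positivity)
    _ = (1/2:ℝ)^(k+K) := mul_one _

/-- A probability functional on `C(Y)`: a positive normalized continuous linear
functional.  By the Riesz representation theorem these correspond exactly to the Borel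
probability measures `M₁(Y)`. -/
def IsProbFunctional {Y : Type*} [TopologicalSpace Y] (μ : C(Y, ℂ) →L[ℂ] ℂ) : Prop :=
  (∀ φ : C(Y, ℂ), (∀ y, 0 ≤ φ y) → 0 ≤ μ φ) ∧ μ 1 = 1

section PF
variable {Y : Type*} [TopologicalSpace Y] [CompactSpace Y]

lemma pf_real_bound {μ : C(Y,ℂ) →L[ℂ] ℂ} (hμ : IsProbFunctional μ)
    (ψ : C(Y,ℂ)) (hψ : ∀ y, (ψ y).im = 0) : ‖μ ψ‖ ≤ ‖ψ‖ := by
  set C : ℝ := ‖ψ‖ with hC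
  have hre : ∀ y, |(ψ y).re| ≤ C := fun y => by
    refine (Complex.abs_re_le_norm _).trans ?_
    simpa using ψ.norm_coe_le_norm y
  have key : ∀ s : ℝ, s = 1 ∨ s = -1 → 0 ≤ (C : ℂ) + s • μ ψ := by
    intro s hs
    have : (C : ℂ) + s • μ ψ = μ ((C : ℂ) • 1 + (s:ℂ) • ψ) := by
      rw [map_add, map_smul, map_smul, hμ.2, smul_eq_mul, mul_one]
      norm_num [Complex.real_smul]
    rw [this]
    refine hμ.1 _ fun y => ?_
    have hy : ((C : ℂ) • (1:C(Y,ℂ)) + (s:ℂ) • ψ) y = (C : ℂ) + (s:ℂ) * ψ y := by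
      simp
    rw [hy, Complex.le_def]
    constructor
    · simp only [Complex.zero_re, Complex.add_re, Complex.ofReal_re, Complex.mul_re,
        Complex.ofReal_im, hψ y]
      rcases hs with h | h <;> rw [h] <;> cases abs_le.1 (hre y) with
      | intro h1 h2 => nlinarith
    · simp [Complex.ext_iff, hψ y]
  have h1 := key 1 (Or.inl rfl)
  have h2 := key (-1) (Or.inr rfl)
  rw [Complex.le_def] at h1 h2
  simp only [Complex.real_smul, Complex.ofReal_one, Complex.ofReal_neg, one_mul, neg_mul,
    Complex.add_re, Complex.add_im, Complex.ofReal_re, Complex.ofReal_im, Complex.neg_re,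
    Complex.neg_im, Complex.zero_re, Complex.zero_im, zero_add] at h1 h2
  have him : (μ ψ).im = 0 := by linarith [h1.2, h2.2]
  have hrebd : |(μ ψ).re| ≤ C := by
    rw [abs_le]
    exact ⟨by linarith [h2.1], by linarith [h1.1]⟩
  have : μ ψ = ((μ ψ).re : ℂ) := Complex.ext rfl (by simp [him])
  rw [this, Complex.norm_real]
  exact hrebd

lemma pf_bound {μ : C(Y,ℂ) →L[ℂ] ℂ} (hμ : IsProbFunctional μ)
    (φ : C(Y,ℂ)) : ‖μ φ‖ ≤ 2 * ‖φ‖ := by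
  set φre : C(Y,ℂ) := ⟨fun y => ((φ y).re : ℂ),
    Complex.continuous_ofReal.comp (Complex.continuous_re.comp φ.continuous)⟩ with hφre
  set φim : C(Y,ℂ) := ⟨fun y => ((φ y).im : ℂ),
    Complex.continuous_ofReal.comp (Complex.continuous_im.comp φ.continuous)⟩ with hφim
  have hsplit : φ = φre + Complex.I • φim := by
    ext y
    simp [hφre, hφim, Complex.ext_iff]
  have hb : ∀ ψ : C(Y,ℂ), (∀ y, (ψ y).im = 0) → (∀ y, |(ψ y).re| ≤ ‖φ‖) → ‖μ ψ‖ ≤ ‖φ‖ := by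
    intro ψ h1 h2
    refine (pf_real_bound hμ ψ h1).trans ?_
    rw [ContinuousMap.norm_le _ (norm_nonneg φ)]
    intro y
    have : ‖ψ y‖ = |(ψ y).re| := by
      have : ψ y = ((ψ y).re : ℂ) := Complex.ext rfl (by simp [h1 y])
      rw [this, Complex.norm_real]
      simp
    rw [this]
    exact h2 y
  have hre : ‖μ φre‖ ≤ ‖φ‖ := by
    refine hb φre (fun y => by simp [hφre]) (fun y => ?_)
    simp only [hφre, ContinuousMap.coe_mk, Complex.ofReal_re]
    exact (Complex.abs_re_le_norm _).trans (by simpa using φ.norm_coe_le_norm y)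
  have him : ‖μ φim‖ ≤ ‖φ‖ := by
    refine hb φim (fun y => by simp [hφim]) (fun y => ?_)
    simp only [hφim, ContinuousMap.coe_mk, Complex.ofReal_re]
    exact (Complex.abs_im_le_norm _).trans (by simpa using φ.norm_coe_le_norm y)
  calc ‖μ φ‖ = ‖μ φre + Complex.I * μ φim‖ := by
        rw [hsplit, map_add, map_smul]
        norm_num
    _ ≤ ‖μ φre‖ + ‖Complex.I * μ φim‖ := norm_add_le _ _
    _ ≤ ‖φ‖ + ‖φ‖ := by
        rw [norm_mul, Complex.norm_I, one_mul]
        exact add_le_add hre him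
    _ = 2 * ‖φ‖ := by ring

/-- The Dirac functional at `y`. -/
noncomputable def dirac (y : Y) : C(Y, ℂ) →L[ℂ] ℂ :=
  LinearMap.mkContinuous
    { toFun := fun f => f y
      map_add' := fun f g => rfl
      map_smul' := fun c f => rfl } 1
    (fun f => by simpa using f.norm_coe_le_norm y)

@[simp] lemma dirac_apply (y : Y) (f : C(Y, ℂ)) : dirac y f = f y := rfl

lemma dirac_isProbFunctional (y : Y) : IsProbFunctional (dirac y) :=
  ⟨fun φ hφ => hφ y, rfl⟩

end PF

section Markov
variable {Y : Type*} [TopologicalSpace Y] [CompactSpace Y]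
variable (M : C(Y, ℂ) →L[ℂ] C(Y, ℂ))

lemma pow_one_eq (h1 : M 1 = 1) (n : ℕ) : (M ^ n) 1 = 1 := by
  induction n with
  | zero => rfl
  | succ n ih => rw [pow_succ, ContinuousLinearMap.mul_apply, h1, ih]

lemma pow_pos_eq (hpos : ∀ φ : C(Y, ℂ), (∀ y, 0 ≤ φ y) → ∀ y, 0 ≤ M φ y)
    (n : ℕ) (φ : C(Y, ℂ)) (hφ : ∀ y, 0 ≤ φ y) : ∀ y, 0 ≤ (M ^ n) φ y := by
  induction n generalizing φ with
  | zero => exact hφ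
  | succ n ih =>
      rw [pow_succ, ContinuousLinearMap.mul_apply]
      exact ih (M φ) (hpos φ hφ)

variable (h1 : M 1 = 1) (hpos : ∀ φ : C(Y, ℂ), (∀ y, 0 ≤ φ y) → ∀ y, 0 ≤ M φ y)
include h1 hpos

lemma diracM_isProbFunctional (n : ℕ) (y : Y) :
    IsProbFunctional ((dirac y).comp (M ^ n)) :=
  ⟨fun φ hφ => pow_pos_eq M hpos n φ hφ y, by
    simp only [ContinuousLinearMap.comp_apply, pow_one_eq M h1, dirac_apply,
      ContinuousMap.one_apply]⟩



lemma pow_norm_le (n : ℕ) (φ : C(Y, ℂ)) : ‖(M ^ n) φ‖ ≤ 2 * ‖φ‖ := by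
  rw [ContinuousMap.norm_le _ (by positivity)]
  intro y
  exact pf_bound (diracM_isProbFunctional M h1 hpos n y) φ

end Markov

open BoundedContinuousFunction in

/-- A family of continuous maps that is equicontinuous and uniformly bounded admits,
for every `ε₁ > 0`, a finite approximating set from a dense sequence. -/
lemma net_lemma {Y : Type*} [MetricSpace Y] [CompactSpace Y]
    (φs : ℕ → C(Y, ℂ)) (hdense : DenseRange φs)
    (F : ℕ → C(Y, ℂ)) (R : ℝ)
    (hbd : ∀ n, ‖F n‖ ≤ R)
    (heqc : ∀ y0 : Y, ∀ ε' > (0:ℝ), ∃ δ > (0:ℝ), ∀ z : Y, dist y0 z < δ →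
      ∀ n, ‖F n y0 - F n z‖ < ε')
    (ε₁ : ℝ) (hε₁ : 0 < ε₁) :
    ∃ N : ℕ, ∀ n : ℕ, ∃ j ≤ N, ‖F n - φs j‖ < ε₁ := by
  set A : Set (Y →ᵇ ℂ) := Set.range (fun n => BoundedContinuousFunction.mkOfCompact (F n)) with hA
  have hR : 0 ≤ R := le_trans (norm_nonneg _) (hbd 0)
  have in_s : ∀ (f : Y →ᵇ ℂ) (x : Y), f ∈ A → f x ∈ Metric.closedBall (0:ℂ) R := by
    rintro f x ⟨n, rfl⟩
    simp only [Metric.mem_closedBall, dist_zero_right, BoundedContinuousFunction.mkOfCompact_apply]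
    exact le_trans ((F n).norm_coe_le_norm x) (hbd n)
  have heq : Equicontinuous ((↑) : A → Y → ℂ) := by
    intro y0
    rw [Metric.equicontinuousAt_iff]
    intro ε' hε'
    obtain ⟨δ, hδ, hd⟩ := heqc y0 ε' hε'
    refine ⟨δ, hδ, fun z hz i => ?_⟩
    obtain ⟨n, hn⟩ := i.2
    have h1 : (i : Y →ᵇ ℂ) y0 = F n y0 := by rw [← hn]; rfl
    have h2 : (i : Y →ᵇ ℂ) z = F n z := by rw [← hn]; rfl
    rw [h1, h2, dist_eq_norm]
    exact hd z (by rwa [dist_comm]) n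
  have hcomp : IsCompact (closure A) :=
    BoundedContinuousFunction.arzela_ascoli (Metric.closedBall (0:ℂ) R)
      (isCompact_closedBall 0 R) A in_s heq
  have htb : TotallyBounded A := hcomp.totallyBounded.subset subset_closure
  obtain ⟨t, htfin, htsub⟩ := Metric.totallyBounded_iff.1 htb (ε₁/2) (by linarith)
  -- choose approximating indices for elements of t
  have hch : ∀ c : Y →ᵇ ℂ, ∃ j : ℕ, dist (c.toContinuousMap) (φs j) < ε₁/2 := fun c =>
    Metric.denseRange_iff.1 hdense _ _ (by linarith)
  choose jf hjf using hch
  set N : ℕ := (htfin.toFinset.image jf).sup id with hN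
  refine ⟨N, fun n => ?_⟩
  have hmem : BoundedContinuousFunction.mkOfCompact (F n) ∈ ⋃ y ∈ t, Metric.ball y (ε₁/2) :=
    htsub ⟨n, rfl⟩
  simp only [Set.mem_iUnion, Metric.mem_ball, exists_prop] at hmem
  obtain ⟨c, hct, hc⟩ := hmem
  refine ⟨jf c, ?_, ?_⟩
  · have : jf c ∈ htfin.toFinset.image jf := by
      simp only [Finset.mem_image, Set.Finite.mem_toFinset]
      exact ⟨c, hct, rfl⟩
    exact Finset.le_sup (f := id) this
  · have hc' : dist (F n) (c.toContinuousMap) < ε₁/2 := by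
      have : BoundedContinuousFunction.mkOfCompact (c.toContinuousMap) = c := by
        ext x; rfl
      rw [← BoundedContinuousFunction.dist_mkOfCompact, this]
      exact hc
    have := dist_triangle (F n) (c.toContinuousMap) (φs (jf c))
    rw [← dist_eq_norm]
    calc dist (F n) (φs (jf c)) ≤ _ := this
      _ < ε₁/2 + ε₁/2 := add_lt_add hc' (hjf c)
      _ = ε₁ := by ring

/-- For a Markov operator `M` on `C(Y)`, the family
`{(M*)ⁿ : M₁(Y) → M₁(Y)}` is equicontinuous on all of `M₁(Y)` (with the weak* metric
`d₀(μ,ν) = Σ_k 2^{-k} gfun ‖μ(φ_k) − ν(φ_k)‖`, using `((M*)ⁿ μ)(φ) = μ(Mⁿ φ)`) if and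
only if the restriction to the Dirac measures `δ_y` (i.e. to `Y ⊆ M₁(Y)`, where
`δ_y(φ) = φ(y)`) is equicontinuous at every point of `Y`. -/
theorem stmt5 {Y : Type*} [MetricSpace Y] [CompactSpace Y]
    (φs : ℕ → C(Y, ℂ)) (hdense : DenseRange φs)
    (M : C(Y, ℂ) →L[ℂ] C(Y, ℂ))
    (h1 : M 1 = 1)
    (hpos : ∀ φ : C(Y, ℂ), (∀ y, 0 ≤ φ y) → ∀ y, 0 ≤ M φ y) :
    (∀ μ : C(Y, ℂ) →L[ℂ] ℂ, IsProbFunctional μ →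
      ∀ ε > (0 : ℝ), ∃ δ > (0 : ℝ), ∀ ν : C(Y, ℂ) →L[ℂ] ℂ, IsProbFunctional ν →
        (∑' k : ℕ, (1 / 2 : ℝ) ^ k * gfun ‖μ (φs k) - ν (φs k)‖) < δ →
        ∀ n : ℕ,
          (∑' k : ℕ, (1 / 2 : ℝ) ^ k * gfun ‖μ ((M ^ n) (φs k)) - ν ((M ^ n) (φs k))‖) < ε)
    ↔ (∀ y0 : Y, ∀ ε > (0 : ℝ), ∃ δ > (0 : ℝ), ∀ z : Y, dist y0 z < δ → ∀ n : ℕ,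
        (∑' k : ℕ, (1 / 2 : ℝ) ^ k * gfun ‖(M ^ n) (φs k) y0 - (M ^ n) (φs k) z‖) < ε) := by
  constructor
  · -- forward direction: restrict to Dirac functionals
    intro H y0 ε hε
    obtain ⟨δ, hδ, hH⟩ := H (dirac y0) (dirac_isProbFunctional y0) ε hε
    obtain ⟨K, hK⟩ : ∃ K : ℕ, 2 * (1/2:ℝ)^K < δ/2 := by
      obtain ⟨K, hK⟩ := exists_pow_lt_of_lt_one (show (0:ℝ) < δ/4 by linarith)
        (by norm_num : (1/2:ℝ) < 1)
      exact ⟨K, by linarith⟩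
    have hcont : ContinuousAt (fun z => ∑ k ∈ Finset.range K, ‖φs k y0 - φs k z‖) y0 :=
      (continuous_finset_sum _ fun k _ =>
        ((continuous_const.sub (φs k).continuous).norm)).continuousAt
    obtain ⟨δ', hδ', hd'⟩ := Metric.continuousAt_iff.1 hcont (δ/2) (by linarith)
    refine ⟨δ', hδ', fun z hz n => ?_⟩
    have hgz : (∑ k ∈ Finset.range K, ‖φs k y0 - φs k z‖) < δ/2 := by
      have h := hd' (show dist z y0 < δ' by rwa [dist_comm])
      have hg0 : (∑ k ∈ Finset.range K, ‖φs k y0 - φs k y0‖) = 0 := by simp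
      rw [Real.dist_eq, hg0, sub_zero] at h
      exact lt_of_le_of_lt (le_abs_self _) h
    have hdsum : (∑' k, (1/2:ℝ)^k * gfun ‖(dirac y0) (φs k) - (dirac z) (φs k)‖) < δ := by
      have hrw : (∑' k, (1/2:ℝ)^k * gfun ‖(dirac y0) (φs k) - (dirac z) (φs k)‖)
          = ∑' k, (1/2:ℝ)^k * gfun ‖φs k y0 - φs k z‖ := by
        exact tsum_congr fun k => by rw [dirac_apply, dirac_apply]
      rw [hrw]
      refine lt_of_le_of_lt (d_tsum_le (fun k => ‖φs k y0 - φs k z‖)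
        (fun k => norm_nonneg _) K) ?_
      have hhead : (∑ k ∈ Finset.range K, (1/2:ℝ)^k * gfun ‖φs k y0 - φs k z‖)
          ≤ ∑ k ∈ Finset.range K, ‖φs k y0 - φs k z‖ := by
        refine Finset.sum_le_sum fun k _ => ?_
        calc (1/2:ℝ)^k * gfun ‖φs k y0 - φs k z‖ ≤ 1 * gfun ‖φs k y0 - φs k z‖ :=
              mul_le_mul_of_nonneg_right (pow_le_one₀ (by norm_num) (by norm_num))
                (gfun_nonneg (norm_nonneg _))
          _ = gfun ‖φs k y0 - φs k z‖ := one_mul _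
          _ ≤ ‖φs k y0 - φs k z‖ := gfun_le_self (norm_nonneg _)
      linarith
    have hfin := hH (dirac z) (dirac_isProbFunctional z) hdsum n
    have hrw : (∑' k, (1/2:ℝ)^k * gfun ‖(dirac y0) ((M ^ n) (φs k)) -
        (dirac z) ((M ^ n) (φs k))‖)
        = ∑' k, (1/2:ℝ)^k * gfun ‖(M ^ n) (φs k) y0 - (M ^ n) (φs k) z‖ :=
      tsum_congr fun k => by rw [dirac_apply, dirac_apply]
    rw [hrw] at hfin
    exact hfin
  · -- backward direction
    intro H μ hμ ε hε
    obtain ⟨K, hK⟩ : ∃ K : ℕ, 2 * (1/2:ℝ)^K < ε/2 := by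
      obtain ⟨K, hK⟩ := exists_pow_lt_of_lt_one (show (0:ℝ) < ε/4 by linarith)
        (by norm_num : (1/2:ℝ) < 1)
      exact ⟨K, by linarith⟩
    -- equicontinuity of each family `{Mⁿ φₖ}ₙ`
    have heqc : ∀ k : ℕ, ∀ y0 : Y, ∀ ε' > (0:ℝ), ∃ δ > (0:ℝ), ∀ z : Y, dist y0 z < δ →
        ∀ n, ‖(M ^ n) (φs k) y0 - (M ^ n) (φs k) z‖ < ε' := by
      intro k y0 ε' hε'
      obtain ⟨δ, hδ, hd⟩ := H y0 ((1/2:ℝ)^k * gfun ε')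
        (mul_pos (by positivity) (gfun_pos hε'))
      refine ⟨δ, hδ, fun z hz n => ?_⟩
      have hsum := hd z hz n
      have hterm := term_le_d (fun k' => ‖(M ^ n) (φs k') y0 - (M ^ n) (φs k') z‖)
        (fun _ => norm_nonneg _) k
      have h2 : (1/2:ℝ)^k * gfun ‖(M ^ n) (φs k) y0 - (M ^ n) (φs k) z‖
          < (1/2:ℝ)^k * gfun ε' := lt_of_le_of_lt hterm hsum
      have h3 := (mul_lt_mul_iff_right₀ (by positivity : (0:ℝ) < (1/2:ℝ)^k)).1 h2
      exact lt_of_gfun_lt (le_of_lt hε') h3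
    -- finite approximating nets via Arzelà–Ascoli
    have hnet : ∀ k : ℕ, ∃ N : ℕ, ∀ n : ℕ, ∃ j ≤ N, ‖(M ^ n) (φs k) - φs j‖ < ε/32 :=
      fun k => net_lemma φs hdense (fun n => (M ^ n) (φs k)) (2 * ‖φs k‖)
        (fun n => pow_norm_le M h1 hpos n (φs k)) (heqc k) (ε/32) (by linarith)
    choose N hN using hnet
    set Nb := (Finset.range K).sup N with hNb
    refine ⟨(1/2:ℝ)^Nb * gfun (ε/8),
      mul_pos (by positivity) (gfun_pos (by linarith)), fun ν hν hd n => ?_⟩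
    have hf : ∀ k, (0:ℝ) ≤ ‖μ ((M ^ n) (φs k)) - ν ((M ^ n) (φs k))‖ :=
      fun _ => norm_nonneg _
    have key : ∀ k < K, ‖μ ((M ^ n) (φs k)) - ν ((M ^ n) (φs k))‖ ≤ ε/4 := by
      intro k hk
      obtain ⟨j, hjN, hj⟩ := hN k n
      have hjNb : j ≤ Nb := le_trans hjN (Finset.le_sup (Finset.mem_range.2 hk))
      have hmid : ‖μ (φs j) - ν (φs j)‖ < ε/8 := by
        have hterm := term_le_d (fun i => ‖μ (φs i) - ν (φs i)‖) (fun _ => norm_nonneg _) j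
        have h2 : (1/2:ℝ)^j * gfun ‖μ (φs j) - ν (φs j)‖ < (1/2:ℝ)^Nb * gfun (ε/8) :=
          lt_of_le_of_lt hterm hd
        have h3 : (1/2:ℝ)^Nb * gfun (ε/8) ≤ (1/2:ℝ)^j * gfun (ε/8) :=
          mul_le_mul_of_nonneg_right
            (pow_le_pow_of_le_one (by norm_num) (by norm_num) hjNb)
            (gfun_nonneg (by linarith))
        have h4 := (mul_lt_mul_iff_right₀ (by positivity : (0:ℝ) < (1/2:ℝ)^j)).1
          (lt_of_lt_of_le h2 h3)
        exact lt_of_gfun_lt (by linarith) h4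
      have hμb : ‖μ ((M ^ n) (φs k) - φs j)‖ ≤ ε/16 := by
        refine le_trans (pf_bound hμ _) ?_
        have := le_of_lt hj
        linarith
      have hνb : ‖ν (φs j - (M ^ n) (φs k))‖ ≤ ε/16 := by
        refine le_trans (pf_bound hν _) ?_
        have h5 : ‖φs j - (M ^ n) (φs k)‖ = ‖(M ^ n) (φs k) - φs j‖ := norm_sub_rev _ _
        rw [h5]
        have := le_of_lt hj
        linarith
      have hdecomp : μ ((M ^ n) (φs k)) - ν ((M ^ n) (φs k)) =
          μ ((M ^ n) (φs k) - φs j) + (μ (φs j) - ν (φs j)) + ν (φs j - (M ^ n) (φs k)) := by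
        rw [map_sub, map_sub]
        ring
      rw [hdecomp]
      calc ‖μ ((M ^ n) (φs k) - φs j) + (μ (φs j) - ν (φs j)) + ν (φs j - (M ^ n) (φs k))‖
          ≤ ‖μ ((M ^ n) (φs k) - φs j)‖ + ‖μ (φs j) - ν (φs j)‖ +
            ‖ν (φs j - (M ^ n) (φs k))‖ := norm_add₃_le
        _ ≤ ε/16 + ε/8 + ε/16 := by
            exact add_le_add (add_le_add hμb (le_of_lt hmid)) hνb
        _ = ε/4 := by ring
    have hhead : (∑ k ∈ Finset.range K,
        (1/2:ℝ)^k * gfun ‖μ ((M ^ n) (φs k)) - ν ((M ^ n) (φs k))‖) ≤ ε/2 := by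
      have hsum2 : (∑ k ∈ Finset.range K, (1/2:ℝ)^k) ≤ 2 := by
        refine le_trans (Summable.sum_le_tsum (Finset.range K) (fun i _ => by positivity)
          summable_geometric_two) ?_
        rw [tsum_geometric_two]
      calc (∑ k ∈ Finset.range K,
            (1/2:ℝ)^k * gfun ‖μ ((M ^ n) (φs k)) - ν ((M ^ n) (φs k))‖)
          ≤ ∑ k ∈ Finset.range K, (1/2:ℝ)^k * (ε/4) := by
            refine Finset.sum_le_sum fun k hk => ?_
            exact mul_le_mul_of_nonneg_left
              (le_trans (gfun_le_self (hf k)) (key k (Finset.mem_range.1 hk)))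
              (by positivity)
        _ = (∑ k ∈ Finset.range K, (1/2:ℝ)^k) * (ε/4) := by rw [← Finset.sum_mul]
        _ ≤ 2 * (ε/4) := mul_le_mul_of_nonneg_right hsum2 (by linarith)
        _ = ε/2 := by ring
    have hsplit := d_tsum_le (fun k => ‖μ ((M ^ n) (φs k)) - ν ((M ^ n) (φs k))‖) hf K
    linarith
end

section
/- Let S = (V, E, (Γ_e)_{e∈E}) be a GDMS on a compact metric space Y such that each Γ_e is a compact subset of the open continuous self-maps of Y. Then for every vertex i ∈ V, the Julia set satisfies the backward self-similarity identity J_i(S) = ⋃_{e∈E, i(e)=i} ⋃_{f∈Γ_e} f⁻¹(J_{t(e)}(S)). -/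
/-! Graph directed Markov systems (GDMS) on a compact metric space `Y`.
A GDMS is given by a finite directed graph with vertex set `V`, edge set `E`,
initial/terminal vertex maps `ie te : E → V`, and a nonempty family `Γ e` of continuous
self-maps of `Y` attached to each edge `e`. -/

/-- `HWord ie te Γ i j h` means that `h` is a composition `f_N ∘ ⋯ ∘ f_1` along an
admissible word of edges starting at vertex `i` and ending at vertex `j`,
with `f_n ∈ Γ e_n`; i.e. `h ∈ H_i^j(S)`. -/
inductive HWord {Y V E : Type*} [TopologicalSpace Y] (ie te : E → V) (Γ : E → Set C(Y, Y)) :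
    V → V → (Y → Y) → Prop
  | base {e : E} {f : C(Y, Y)} (hf : f ∈ Γ e) : HWord ie te Γ (ie e) (te e) ⇑f
  | comp {i k : V} {h : Y → Y} {e : E} {f : C(Y, Y)}
      (hh : HWord ie te Γ i k h) (hf : f ∈ Γ e) (hk : ie e = k) :
      HWord ie te Γ i (te e) (⇑f ∘ h)

variable {Y V E : Type*} [UniformSpace Y]

/-- `H_i^j(S)`, the set of compositions along admissible words from `i` to `j`. -/
def Hij (ie te : E → V) (Γ : E → Set C(Y, Y)) (i j : V) : Set (Y → Y) :=
  {h | HWord ie te Γ i j h}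

/-- `H_i(S) = ⋃_j H_i^j(S)`. -/
def Hset (ie te : E → V) (Γ : E → Set C(Y, Y)) (i : V) : Set (Y → Y) :=
  {h | ∃ j, HWord ie te Γ i j h}

/-- The Julia set of a family `F` of self-maps of `Y`: the set of points `y` having no
neighborhood on which `F` is equicontinuous. -/
def JuliaOf (F : Set (Y → Y)) : Set Y :=
  {y | ¬ ∃ U ∈ nhds y, ∀ z ∈ U, EquicontinuousAt (fun f : F => (f : Y → Y)) z}

/-- The Julia set `J_i(S)` of the GDMS at vertex `i`. -/
def Julia (ie te : E → V) (Γ : E → Set C(Y, Y)) (i : V) : Set Y :=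
  JuliaOf (Hset ie te Γ i)

/-- The Fatou set `F_i(S)` of the GDMS at vertex `i`. -/
def Fatou (ie te : E → V) (Γ : E → Set C(Y, Y)) (i : V) : Set Y :=
  (Julia ie te Γ i)ᶜ

open Classical in
/-- The kernel Julia set `J_{ker,i}(S) = ⋂_{j : H_i^j ≠ ∅} ⋂_{h ∈ H_i^j} h⁻¹(J_j(S))`,
set to `∅` when `H_i^j(S) = ∅` for all `j`. -/
noncomputable def kerJulia (ie te : E → V) (Γ : E → Set C(Y, Y)) (i : V) : Set Y :=
  if ∀ j, Hij ie te Γ i j = ∅ then ∅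
  else ⋂ j, ⋂ h ∈ Hij ie te Γ i j, h ⁻¹' Julia ie te Γ j

/-- Forward `S`-invariance of a family `(L_i)_{i ∈ V}` of subsets of `Y`. -/
def FwdInv (ie te : E → V) (Γ : E → Set C(Y, Y)) (L : V → Set Y) : Prop :=
  ∀ e : E, ∀ f ∈ Γ e, ⇑f '' L (ie e) ⊆ L (te e)

/-- Backward `S`-invariance of a family `(L_i)_{i ∈ V}` of subsets of `Y`. -/
def BwdInv (ie te : E → V) (Γ : E → Set C(Y, Y)) (L : V → Set Y) : Prop :=
  ∀ e : E, ∀ f ∈ Γ e, ⇑f ⁻¹' L (te e) ⊆ L (ie e)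

/-- Irreducibility of the GDMS: for any two vertices there is an admissible word
from one to the other, i.e. the directed graph is strongly connected. -/
def Irreducible' (ie te : E → V) (Γ : E → Set C(Y, Y)) : Prop :=
  ∀ i j : V, (Hij ie te Γ i j).Nonempty

section BackwardSelfSimilarityAux

open Metric Filter

variable {X V' E' : Type*}

/-- Prepending a generator to an admissible word. -/
lemma hword_prepend [TopologicalSpace X] (ie te : E' → V') (Γ : E' → Set C(X, X))
    {e : E'} {f : C(X, X)} (hf : f ∈ Γ e) :
    ∀ {k j : V'} {g : X → X}, HWord ie te Γ k j g → k = te e →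
      HWord ie te Γ (ie e) j (g ∘ ⇑f) := by
  intro k j g hg
  induction hg with
  | base hg' => intro hk; exact HWord.comp (HWord.base hf) hg' hk
  | comp hh hf' hk ih => intro h; exact HWord.comp (ih h) hf' hk

/-- Every admissible word decomposes as a generator possibly followed by a word. -/
lemma hword_decompose [TopologicalSpace X] (ie te : E' → V') (Γ : E' → Set C(X, X)) :
    ∀ {i j : V'} {h : X → X}, HWord ie te Γ i j h →
      ∃ e : E', ie e = i ∧ ∃ f : C(X, X), f ∈ Γ e ∧
        ((j = te e ∧ h = ⇑f) ∨
          ∃ g : X → X, HWord ie te Γ (te e) j g ∧ h = g ∘ ⇑f) := by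
  intro i j h hh
  induction hh with
  | base hf => exact ⟨_, rfl, _, hf, Or.inl ⟨rfl, rfl⟩⟩
  | @comp i k h e₂ f₂ hh hf₂ hk ih =>
      obtain ⟨e, hei, f, hf, hcase⟩ := ih
      refine ⟨e, hei, f, hf, Or.inr ?_⟩
      rcases hcase with ⟨hkte, rfl⟩ | ⟨g, hg, rfl⟩
      · subst hkte
        exact ⟨⇑f₂, by rw [← hk]; exact HWord.base hf₂, rfl⟩
      · exact ⟨⇑f₂ ∘ g, HWord.comp hg hf₂ hk, rfl⟩

/-- The "Fatou region" at a vertex: points with a neighborhood of equicontinuity. -/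
def FatReg [UniformSpace X] (ie te : E' → V') (Γ : E' → Set C(X, X)) (j : V') : Set X :=
  {p | ∃ U ∈ nhds p, ∀ z ∈ U,
    EquicontinuousAt (fun h : Hset ie te Γ j => (h : X → X)) z}

lemma not_mem_julia_iff [UniformSpace X] {ie te : E' → V'} {Γ : E' → Set C(X, X)} {j : V'}
    {y : X} : y ∉ Julia ie te Γ j ↔ y ∈ FatReg ie te Γ j := by
  simp [Julia, JuliaOf, FatReg]

lemma isOpen_fatReg [UniformSpace X] (ie te : E' → V') (Γ : E' → Set C(X, X)) (j : V') :
    IsOpen (FatReg ie te Γ j) := by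
  rw [isOpen_iff_mem_nhds]
  rintro p ⟨U, hU, hprop⟩
  refine Filter.mem_of_superset (interior_mem_nhds.mpr hU) ?_
  intro z hz
  exact ⟨interior U, isOpen_interior.mem_nhds hz, fun w hw => hprop w (interior_subset hw)⟩

lemma equi_of_mem_fatReg [UniformSpace X] {ie te : E' → V'} {Γ : E' → Set C(X, X)} {j : V'}
    {p : X} (hp : p ∈ FatReg ie te Γ j) :
    EquicontinuousAt (fun h : Hset ie te Γ j => (h : X → X)) p := by
  obtain ⟨U, hU, hprop⟩ := hp
  exact hprop p (mem_of_mem_nhds hU)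

/-- A compact family of continuous maps is (locally, hence at every point) equicontinuous. -/
lemma gen_equi [MetricSpace X] [CompactSpace X] {G : Set C(X, X)} (hG : IsCompact G)
    (z : X) {ε : ℝ} (hε : 0 < ε) :
    ∀ᶠ w in nhds z, ∀ f ∈ G, dist (f z) (f w) < ε := by
  obtain ⟨t, ht, hcover⟩ := (Metric.totallyBounded_iff.mp hG.totallyBounded) (ε / 3)
    (by positivity)
  have h1 : ∀ᶠ w in nhds z, ∀ g ∈ t, dist (g w) (g z) < ε / 3 := by
    rw [Filter.eventually_all_finite ht]
    intro g _
    exact Metric.tendsto_nhds.mp (g.continuous.tendsto z) _ (by positivity)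
  filter_upwards [h1] with w hw f hf
  obtain ⟨g, hg, hfg⟩ : ∃ g ∈ t, dist f g < ε / 3 := by
    have := hcover hf
    simpa [Metric.mem_ball] using this
  have hfz : dist (f z) (g z) ≤ dist f g := ContinuousMap.dist_apply_le_dist z
  have hfw : dist (g w) (f w) ≤ dist g f := ContinuousMap.dist_apply_le_dist w
  have hgw : dist (g z) (g w) < ε / 3 := by rw [dist_comm]; exact hw g hg
  have hgf : dist g f < ε / 3 := by rw [dist_comm]; exact hfg
  calc dist (f z) (f w) ≤ dist (f z) (g z) + dist (g z) (g w) + dist (g w) (f w) :=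
        dist_triangle4 _ _ _ _
    _ < ε / 3 + ε / 3 + ε / 3 := by
        have := hfz.trans_lt hfg
        have := hfw.trans_lt hgf
        linarith
    _ = ε := by ring

/-- Uniform equicontinuity near a compact set of equicontinuity points. -/
lemma unif_equi [MetricSpace X] {ι : Type*} {F : ι → X → X} {K : Set X} (hK : IsCompact K)
    (hF : ∀ p ∈ K, EquicontinuousAt F p) {ε : ℝ} (hε : 0 < ε) :
    ∃ η > 0, ∀ p ∈ K, ∀ q, dist q p < η → ∀ i, dist (F i p) (F i q) < ε := by
  have key : ∀ p ∈ K, ∃ δ > 0, ∀ x, dist x p < δ → ∀ i, dist (F i p) (F i x) < ε / 2 :=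
    fun p hp => (Metric.equicontinuousAt_iff.mp (hF p hp)) (ε / 2) (by positivity)
  choose! δ hδpos hδ using key
  obtain ⟨t, htK, hcov⟩ := hK.elim_nhds_subcover (fun p => Metric.ball p (δ p / 2))
    (fun p hp => Metric.ball_mem_nhds p (half_pos (hδpos p hp)))
  rcases t.eq_empty_or_nonempty with rfl | hne'
  · exact ⟨1, one_pos, fun p hp => absurd (hcov hp) (by simp)⟩
  refine ⟨t.inf' hne' (fun p => δ p / 2), ?_, ?_⟩
  · rw [gt_iff_lt, Finset.lt_inf'_iff]
    exact fun p hp => half_pos (hδpos p (htK p hp))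
  intro p hp q hq i
  obtain ⟨c, hct, hpc⟩ : ∃ c ∈ t, dist p c < δ c / 2 := by
    have := hcov hp
    simpa [Metric.mem_ball] using this
  have hqp : dist q p < δ c / 2 := hq.trans_le (Finset.inf'_le _ hct)
  have hqc : dist q c < δ c := (dist_triangle q p c).trans_lt (by linarith)
  have h2 := hδ c (htK c hct) q hqc i
  have hpos := hδpos c (htK c hct)
  have h3 := hδ c (htK c hct) p (by linarith) i
  calc dist (F i p) (F i q) ≤ dist (F i p) (F i c) + dist (F i c) (F i q) := dist_triangle _ _ _
    _ < ε / 2 + ε / 2 := by rw [dist_comm (F i p) (F i c)]; exact add_lt_add h3 h2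
    _ = ε := add_halves ε

end BackwardSelfSimilarityAux

/-- (Backward self-similarity.)  For a GDMS in which each `Γ e` is a
compact set of open continuous self-maps of the compact metric space `Y`, the Julia set
at each vertex `i` satisfies `J_i(S) = ⋃_{e : i(e) = i} ⋃_{f ∈ Γ e} f⁻¹(J_{t(e)}(S))`. -/
theorem stmt7 {Y V E : Type*} [MetricSpace Y] [CompactSpace Y] [Fintype V] [Fintype E]
    (ie te : E → V) (Γ : E → Set C(Y, Y))
    (hne : ∀ e, (Γ e).Nonempty)
    (hcpt : ∀ e, IsCompact (Γ e))
    (hopen : ∀ e, ∀ f ∈ Γ e, IsOpenMap (f : Y → Y)) :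
    ∀ i : V, Julia ie te Γ i
      = ⋃ e ∈ {e : E | ie e = i}, ⋃ f ∈ Γ e, ⇑f ⁻¹' Julia ie te Γ (te e) := by
  intro i
  apply Set.Subset.antisymm
  · -- `J_i ⊆ ⋃ f⁻¹(J_{t(e)})`, via complements
    rw [← Set.compl_subset_compl]
    intro y hy
    have hy' : ∀ e, ie e = i → ∀ f : C(Y, Y), f ∈ Γ e → f y ∈ FatReg ie te Γ (te e) := by
      intro e he f hf
      rw [← not_mem_julia_iff]
      intro hmem
      exact hy (Set.mem_biUnion he (Set.mem_biUnion hf hmem))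
    -- a neighborhood of `y` all of whose points `w` satisfy `f w ∈ FatReg (te e)`
    have hPe : ∀ e : E, ∀ᶠ w in nhds y, ie e = i → ∀ f ∈ Γ e,
        f w ∈ FatReg ie te Γ (te e) := by
      intro e
      by_cases he : ie e = i
      · have hKc : IsCompact ((fun f : C(Y, Y) => f y) '' Γ e) :=
          (hcpt e).image (continuous_eval_const y)
        have hKsub : ((fun f : C(Y, Y) => f y) '' Γ e) ⊆ FatReg ie te Γ (te e) := by
          rintro _ ⟨f, hf, rfl⟩
          exact hy' e he f hf
        obtain ⟨δ, hδ, hsub⟩ := hKc.exists_thickening_subset_open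
          (isOpen_fatReg ie te Γ (te e)) hKsub
        filter_upwards [gen_equi (hcpt e) y hδ] with w hw _ f hf
        refine hsub (Metric.mem_thickening_iff.mpr ⟨f y, ⟨f, hf, rfl⟩, ?_⟩)
        rw [dist_comm]; exact hw f hf
      · filter_upwards with w h; exact absurd h he
    have hU : ∀ᶠ w in nhds y, ∀ e : E, ie e = i → ∀ f ∈ Γ e,
        f w ∈ FatReg ie te Γ (te e) := Filter.eventually_all.mpr hPe
    show y ∉ Julia ie te Γ i
    rw [not_mem_julia_iff]
    refine ⟨_, hU, ?_⟩
    intro z hz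
    -- `hz : z` is in the set underlying `hU`
    rw [Metric.equicontinuousAt_iff_right]
    intro ε hε
    have hQe : ∀ e : E, ∀ᶠ w in nhds z, ie e = i → ∀ f ∈ Γ e,
        dist (f z) (f w) < ε ∧
          ∀ g : Hset ie te Γ (te e), dist ((g : Y → Y) (f z)) ((g : Y → Y) (f w)) < ε := by
      intro e
      by_cases he : ie e = i
      · have hKc : IsCompact ((fun f : C(Y, Y) => f z) '' Γ e) :=
          (hcpt e).image (continuous_eval_const z)
        have hKF : ∀ p ∈ (fun f : C(Y, Y) => f z) '' Γ e,
            EquicontinuousAt (fun h : Hset ie te Γ (te e) => (h : Y → Y)) p := by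
          rintro _ ⟨f, hf, rfl⟩
          exact equi_of_mem_fatReg (hz e he f hf)
        obtain ⟨η, hη, hunif⟩ := unif_equi hKc hKF hε
        filter_upwards [gen_equi (hcpt e) z (lt_min hη hε)] with w hw _ f hf
        have h1 := hw f hf
        refine ⟨h1.trans_le (min_le_right _ _), fun g => ?_⟩
        refine hunif (f z) ⟨f, hf, rfl⟩ (f w) ?_ g
        rw [dist_comm]; exact h1.trans_le (min_le_left _ _)
      · filter_upwards with w h; exact absurd h he
    filter_upwards [Filter.eventually_all.mpr hQe] with w hw
    rintro ⟨h, hh⟩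
    obtain ⟨j, hword⟩ := hh
    obtain ⟨e, hei, f, hf, hcase⟩ := hword_decompose ie te Γ hword
    rcases hcase with ⟨-, rfl⟩ | ⟨g, hg, rfl⟩
    · exact (hw e hei f hf).1
    · exact (hw e hei f hf).2 ⟨g, ⟨j, hg⟩⟩
  · -- `⋃ f⁻¹(J_{t(e)}) ⊆ J_i`
    intro y hy
    simp only [Set.mem_iUnion, Set.mem_setOf_eq, Set.mem_preimage] at hy
    obtain ⟨e, he, f, hf, hfy⟩ := hy
    by_contra hcon
    have hcon' : y ∈ FatReg ie te Γ i := not_mem_julia_iff.mp hcon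
    obtain ⟨U, hUy, hprop⟩ := hcon'
    -- show `f y ∉ Julia (te e)`, contradicting `hfy`
    refine not_mem_julia_iff.mpr ?_ hfy
    refine ⟨⇑f '' interior U, (hopen e f hf _ isOpen_interior).mem_nhds
      ⟨y, mem_interior_iff_mem_nhds.mpr hUy, rfl⟩, ?_⟩
    rintro _ ⟨z, hz, rfl⟩
    rw [Metric.equicontinuousAt_iff_right]
    intro ε hε
    have hEz := hprop z (interior_subset hz)
    rw [Metric.equicontinuousAt_iff_right] at hEz
    have hT : ∀ᶠ x in nhds z, ∀ h : Hset ie te Γ i,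
        dist ((h : Y → Y) z) ((h : Y → Y) x) < ε := hEz ε hε
    have hW : ⇑f '' interior {x | ∀ h : Hset ie te Γ i,
        dist ((h : Y → Y) z) ((h : Y → Y) x) < ε} ∈ nhds (f z) :=
      (hopen e f hf _ isOpen_interior).mem_nhds
        ⟨z, mem_interior_iff_mem_nhds.mpr hT, rfl⟩
    refine Filter.eventually_of_mem hW ?_
    rintro _ ⟨x, hx, rfl⟩ ⟨g, hgmem⟩
    obtain ⟨j, hg⟩ := hgmem
    have hgf : g ∘ ⇑f ∈ Hset ie te Γ i := by
      refine ⟨j, ?_⟩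
      rw [← he]
      exact hword_prepend ie te Γ hf hg rfl
    exact interior_subset hx ⟨g ∘ ⇑f, hgf⟩
end

section
/- Let S = (V, E, (Γ_e)_{e∈E}) be an irreducible GDMS on a compact metric space Y such that every map h in the generated family H(S) has the property that for all y ∈ Y, the supremum of diameters of connected components of h⁻¹(B(y,ε)) tends to 0 as ε → 0, and suppose Y is locally connected. Then for every vertex i ∈ V, the Julia set J_i(S) of the GDMS at i equals the Julia set J(H_i^i(S)) of the semigroup H_i^i(S) of compositions along admissible loops based at i. -/
variable {Y V E : Type*} [UniformSpace Y]

section Aux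

open Set Metric

variable {Y V E : Type*} [TopologicalSpace Y] {ie te : E → V} {Γ : E → Set C(Y, Y)}

lemma HWord.continuous' {i j : V} {h : Y → Y} (hw : HWord ie te Γ i j h) :
    Continuous h := by
  induction hw with
  | @base e f hf => exact f.continuous
  | @comp i k h e f hh hf hk ih => exact f.continuous.comp ih

lemma HWord.trans {i j k : V} {h g : Y → Y} (h1 : HWord ie te Γ i j h)
    (h2 : HWord ie te Γ j k g) : HWord ie te Γ i k (g ∘ h) := by
  induction h2 with
  | base hf => exact h1.comp hf rfl
  | @comp j k' h' e f hh hf hk ih =>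
    rw [Function.comp_assoc]
    exact HWord.comp (ih h1) hf hk

lemma uniform_diam {Y : Type*} [MetricSpace Y] [CompactSpace Y] (g : Y → Y)
    (hd : ∀ y : Y, ∀ δ > (0:ℝ), ∃ ε > (0:ℝ), ∀ x ∈ g ⁻¹' Metric.ball y ε,
      Metric.diam (connectedComponentIn (g ⁻¹' Metric.ball y ε) x) ≤ δ)
    {δ : ℝ} (hδ : 0 < δ) :
    ∃ ε > (0:ℝ), ∀ y : Y, ∀ x ∈ g ⁻¹' Metric.ball y ε,
      Metric.diam (connectedComponentIn (g ⁻¹' Metric.ball y ε) x) ≤ δ := by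
  rcases isEmpty_or_nonempty Y with hY | hY
  · exact ⟨1, one_pos, fun y => (IsEmpty.false y).elim⟩
  choose ε hε hprop using fun y => hd y δ hδ
  have hcov : (univ : Set Y) ⊆ ⋃ y, ball y (ε y / 2) := fun x _ =>
    mem_iUnion.2 ⟨x, mem_ball_self (half_pos (hε x))⟩
  obtain ⟨t, ht⟩ := isCompact_univ.elim_finite_subcover (fun y => ball y (ε y / 2))
    (fun y => isOpen_ball) hcov
  have htne : t.Nonempty := by
    obtain ⟨y', hy', -⟩ := Set.mem_iUnion₂.1 (ht (mem_univ (Classical.arbitrary Y)))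
    exact ⟨y', hy'⟩
  refine ⟨t.inf' htne (fun y => ε y / 2), ?_, ?_⟩
  · exact (Finset.lt_inf'_iff htne).2 fun y _ => half_pos (hε y)
  · intro y x hx
    obtain ⟨y', hy't, hy'⟩ := Set.mem_iUnion₂.1 (ht (mem_univ y))
    have hball : ball y (t.inf' htne (fun y => ε y / 2)) ⊆ ball y' (ε y') := by
      intro u hu
      have h1 : dist u y < ε y' / 2 :=
        lt_of_lt_of_le hu (Finset.inf'_le _ hy't)
      calc dist u y' ≤ dist u y + dist y y' := dist_triangle _ _ _
        _ < ε y' / 2 + ε y' / 2 := add_lt_add h1 hy'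
        _ = ε y' := add_halves _
    have hsub : g ⁻¹' ball y (t.inf' htne (fun y => ε y / 2)) ⊆ g ⁻¹' ball y' (ε y') :=
      fun u hu => hball hu
    calc Metric.diam (connectedComponentIn (g ⁻¹' ball y (t.inf' htne (fun y => ε y / 2))) x)
        ≤ Metric.diam (connectedComponentIn (g ⁻¹' ball y' (ε y')) x) :=
          Metric.diam_mono (connectedComponentIn_mono x hsub) isBounded_of_compactSpace
      _ ≤ δ := hprop y' x (hsub hx)

end Aux

/-- For an irreducible GDMS on a compact, locally connected metric
space `Y` all of whose generated maps `h ∈ H(S)` satisfy the vanishing-diameter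
condition on preimages of small balls, the Julia set `J_i(S)` equals the Julia set of
the semigroup `H_i^i(S)` of compositions along admissible loops based at `i`. -/
theorem stmt8 {Y V E : Type*} [MetricSpace Y] [CompactSpace Y] [LocallyConnectedSpace Y]
    [Fintype V] [Fintype E]
    (ie te : E → V) (Γ : E → Set C(Y, Y))
    (hne : ∀ e, (Γ e).Nonempty)
    (hirr : Irreducible' ie te Γ)
    (hdiam : ∀ h : Y → Y, (∃ i j, h ∈ Hij ie te Γ i j) →
      ∀ y : Y, ∀ δ > (0 : ℝ), ∃ ε > (0 : ℝ),
        ∀ x ∈ h ⁻¹' Metric.ball y ε,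
          Metric.diam (connectedComponentIn (h ⁻¹' Metric.ball y ε) x) ≤ δ) :
    ∀ i : V, Julia ie te Γ i = JuliaOf (Hij ie te Γ i i) := by
  intro i
  ext y
  simp only [Julia, JuliaOf, Hset, Set.mem_setOf_eq]
  apply not_congr
  constructor
  · rintro ⟨U, hU, hUe⟩
    refine ⟨U, hU, fun z hz => ?_⟩
    intro W hW
    filter_upwards [hUe z hz W hW] with w hw
    intro f
    exact hw ⟨f.1, ⟨i, f.2⟩⟩
  · rintro ⟨U, hU, hUe⟩
    refine ⟨U, hU, fun z hz => ?_⟩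
    have hzeq := hUe z hz
    choose g hg using fun j => hirr j i
    intro U' hU'
    obtain ⟨ε', hε', hεU'⟩ := Metric.mem_uniformity_dist.1 hU'
    have hgd : ∀ j : V, ∃ ε > (0:ℝ), ∀ y' : Y, ∀ x ∈ (g j) ⁻¹' Metric.ball y' ε,
        Metric.diam (connectedComponentIn ((g j) ⁻¹' Metric.ball y' ε) x) ≤ ε'/2 :=
      fun j => uniform_diam (g j) (hdiam (g j) ⟨j, i, hg j⟩) (half_pos hε')
    choose εf hεf hεfp using hgd
    have hVne : (Finset.univ : Finset V).Nonempty := ⟨i, Finset.mem_univ i⟩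
    set ε₀ := Finset.univ.inf' hVne εf with hε₀def
    have hε₀ : 0 < ε₀ := (Finset.lt_inf'_iff hVne).2 fun j _ => hεf j
    have hW₀ := hzeq _ (Metric.dist_mem_uniformity hε₀)
    have hW₀' : {w | ∀ f : ↥(Hij ie te Γ i i), dist (f.1 z) (f.1 w) < ε₀} ∈ nhds z := hW₀
    set W₀ := {w | ∀ f : ↥(Hij ie te Γ i i), dist (f.1 z) (f.1 w) < ε₀} with hW₀def
    have hzi : z ∈ interior W₀ := mem_interior_iff_mem_nhds.2 hW₀'
    set W := connectedComponentIn (interior W₀) z with hWdef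
    have hWnhds : W ∈ nhds z :=
      (isOpen_interior.connectedComponentIn).mem_nhds (mem_connectedComponentIn hzi)
    have hWsub : W ⊆ W₀ := (connectedComponentIn_subset _ _).trans interior_subset
    have hWpre : IsPreconnected W := isPreconnected_connectedComponentIn
    filter_upwards [hWnhds] with w hw
    rintro ⟨h, j, hj⟩
    apply hεU'
    have hcomp : HWord ie te Γ i i (g j ∘ h) := hj.trans (hg j)
    have himg : h '' W ⊆ (g j) ⁻¹' Metric.ball (g j (h z)) (εf j) := by
      rintro _ ⟨w', hw', rfl⟩
      have hd := hWsub hw' ⟨g j ∘ h, hcomp⟩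
      simp only [Function.comp_apply] at hd
      simp only [Set.mem_preimage, Metric.mem_ball]
      calc dist (g j (h w')) (g j (h z)) = dist (g j (h z)) (g j (h w')) := dist_comm _ _
        _ < ε₀ := hd
        _ ≤ εf j := Finset.inf'_le _ (Finset.mem_univ j)
    have hconn : IsPreconnected (h '' W) := hWpre.image h (hj.continuous'.continuousOn)
    have hWz : h z ∈ h '' W := Set.mem_image_of_mem h (mem_connectedComponentIn hzi)
    have hkey : h '' W ⊆ connectedComponentIn ((g j) ⁻¹' Metric.ball (g j (h z)) (εf j)) (h z) :=
      hconn.subset_connectedComponentIn hWz himg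
    have hx0 : h z ∈ (g j) ⁻¹' Metric.ball (g j (h z)) (εf j) := by
      simp [Metric.mem_ball, hεf j]
    calc dist (h z) (h w)
        ≤ Metric.diam (connectedComponentIn ((g j) ⁻¹' Metric.ball (g j (h z)) (εf j)) (h z)) :=
          Metric.dist_le_diam_of_mem Metric.isBounded_of_compactSpace (hkey hWz)
            (hkey (Set.mem_image_of_mem h hw))
      _ ≤ ε'/2 := hεfp j (g j (h z)) (h z) hx0
      _ < ε' := half_lt_self hε'
end

section
/- Let S be a GDMS on a compact metric space Y and let (J_{ker,i}(S))_{i∈V} denote the kernel Julia sets. Then: (i) the family (J_{ker,i}(S))_{i∈V} is forward S-invariant; and (ii) if (L_i)_{i∈V} is any forward S-invariant family with L_i ⊆ J_i(S) for all i, then L_i ⊆ J_{ker,i}(S) for all i. That is, the kernel Julia sets form the largest forward invariant family contained in the Julia sets. -/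
variable {Y V E : Type*} [UniformSpace Y]

lemma hword_precomp {Y V E : Type*} [TopologicalSpace Y] {ie te : E → V} {Γ : E → Set C(Y, Y)}
    {i j : V} {h : Y → Y} (hh : HWord ie te Γ i j h) :
    ∀ {e : E} {f : C(Y, Y)}, f ∈ Γ e → te e = i → HWord ie te Γ (ie e) j (h ∘ ⇑f) := by
  induction hh with
  | base hg =>
      intro e f hf hte
      exact HWord.comp (HWord.base hf) hg hte.symm
  | comp hh' hg hk ih =>
      intro e f hf hte
      exact HWord.comp (ih hf hte) hg hk

lemma hword_image {Y V E : Type*} [UniformSpace Y] {ie te : E → V} {Γ : E → Set C(Y, Y)}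
    {i j : V} {h : Y → Y} (hh : HWord ie te Γ i j h) {L : V → Set Y}
    (hL : FwdInv ie te Γ L) : h '' L i ⊆ L j := by
  induction hh with
  | base hf => exact hL _ _ hf
  | comp hh' hg hk ih =>
      rw [Set.image_comp]
      refine (Set.image_mono ih).trans ?_
      rw [← hk]
      exact hL _ _ hg

lemma julia_empty {Y V E : Type*} [UniformSpace Y] {ie te : E → V} {Γ : E → Set C(Y, Y)}
    {i : V} (H : ∀ j, Hij ie te Γ i j = ∅) : Julia ie te Γ i = ∅ := by
  ext y
  simp only [Julia, JuliaOf, Set.mem_setOf_eq, Set.mem_empty_iff_false, iff_false, not_not]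
  refine ⟨Set.univ, Filter.univ_mem, fun z _ => ?_⟩
  intro U hU
  filter_upwards with x'
  rintro ⟨g, j, hg⟩
  exact absurd hg (Set.eq_empty_iff_forall_notMem.mp (H j) g)

/-- The kernel Julia sets form the largest forward `S`-invariant family
contained in the Julia sets: (i) `(J_{ker,i}(S))_i` is forward `S`-invariant, and
(ii) any forward `S`-invariant family `(L_i)_i` with `L_i ⊆ J_i(S)` for all `i`
satisfies `L_i ⊆ J_{ker,i}(S)` for all `i`. -/
theorem stmt9 {Y V E : Type*} [MetricSpace Y] [CompactSpace Y] [Fintype V] [Fintype E]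
    (ie te : E → V) (Γ : E → Set C(Y, Y))
    (hne : ∀ e, (Γ e).Nonempty) :
    FwdInv ie te Γ (kerJulia ie te Γ) ∧
    (∀ L : V → Set Y, FwdInv ie te Γ L → (∀ i, L i ⊆ Julia ie te Γ i) →
      ∀ i, L i ⊆ kerJulia ie te Γ i) := by
  constructor
  · intro e f hf
    rintro z ⟨y, hy, rfl⟩
    have hne_ie : ¬ ∀ j, Hij ie te Γ (ie e) j = ∅ := fun H =>
      Set.eq_empty_iff_forall_notMem.mp (H (te e)) _ (HWord.base hf)
    rw [kerJulia, if_neg hne_ie] at hy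
    simp only [Set.mem_iInter, Set.mem_preimage] at hy
    by_cases H : ∀ j, Hij ie te Γ (te e) j = ∅
    · exact absurd (hy (te e) f (HWord.base hf))
        (by rw [julia_empty H]; exact Set.notMem_empty _)
    · rw [kerJulia, if_neg H]
      simp only [Set.mem_iInter, Set.mem_preimage]
      intro j h hh
      exact hy j (h ∘ ⇑f) (hword_precomp hh hf rfl)
  · intro L hL hsub i y hy
    by_cases H : ∀ j, Hij ie te Γ i j = ∅
    · exact absurd (hsub i hy) (by rw [julia_empty H]; exact Set.notMem_empty _)
    · rw [kerJulia, if_neg H]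
      simp only [Set.mem_iInter, Set.mem_preimage]
      intro j h hh
      exact hsub j (hword_image hh hL ⟨y, hy, rfl⟩)
end

section
/- Let S be a GDMS satisfying the backward separating condition. If S is essentially non-deterministic, then J_{ker,j}(S) = ∅ for some vertex j. If moreover S is irreducible, then J_{ker,i}(S) = ∅ for every vertex i. -/
variable {Y V E : Type*} [UniformSpace Y]

/-- If a GDMS satisfies the backward separating condition and is
essentially non-deterministic, then `J_{ker,j}(S) = ∅` for some vertex `j`; if in
addition the GDMS is irreducible, then `J_{ker,i}(S) = ∅` for every vertex `i`. -/
theorem stmt10 {Y V E : Type*} [MetricSpace Y] [CompactSpace Y] [Fintype V] [Fintype E]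
    (ie te : E → V) (Γ : E → Set C(Y, Y))
    (hne : ∀ e, (Γ e).Nonempty)
    (hsep : ∀ e1 e2 : E, ie e1 = ie e2 → ∀ f1 ∈ Γ e1, ∀ f2 ∈ Γ e2,
      ¬ (e1 = e2 ∧ f1 = f2) →
      ⇑f1 ⁻¹' Julia ie te Γ (te e1) ∩ ⇑f2 ⁻¹' Julia ie te Γ (te e2) = ∅)
    (hend : ∃ e1 e2 : E, ie e1 = ie e2 ∧ ∃ f1 ∈ Γ e1, ∃ f2 ∈ Γ e2,
      ¬ (e1 = e2 ∧ f1 = f2)) :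
    (∃ j : V, kerJulia ie te Γ j = ∅) ∧
    (Irreducible' ie te Γ → ∀ i : V, kerJulia ie te Γ i = ∅) := by
  obtain ⟨e1, e2, hie, f1, hf1, f2, hf2, hneq⟩ := hend
  have hsep' := hsep e1 e2 hie f1 hf1 f2 hf2 hneq
  constructor
  · refine ⟨ie e1, ?_⟩
    have w1 : HWord ie te Γ (ie e1) (te e1) ⇑f1 := HWord.base hf1
    have w2 : HWord ie te Γ (ie e1) (te e2) ⇑f2 := by
      have := HWord.base (ie := ie) (te := te) hf2
      rwa [← hie] at this
    unfold kerJulia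
    rw [if_neg]
    · ext y
      simp only [Set.mem_iInter, Set.mem_empty_iff_false, iff_false]
      intro hy
      have h1 : y ∈ ⇑f1 ⁻¹' Julia ie te Γ (te e1) := hy (te e1) ⇑f1 w1
      have h2 : y ∈ ⇑f2 ⁻¹' Julia ie te Γ (te e2) := hy (te e2) ⇑f2 w2
      have : y ∈ (⇑f1 ⁻¹' Julia ie te Γ (te e1) ∩ ⇑f2 ⁻¹' Julia ie te Γ (te e2)) :=
        ⟨h1, h2⟩
      rw [hsep'] at this
      exact this
    · push_neg
      exact ⟨te e1, ⟨⇑f1, w1⟩⟩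
  · intro hirr i
    obtain ⟨h, hh⟩ := hirr i (ie e1)
    have w1 : HWord ie te Γ i (te e1) (⇑f1 ∘ h) := HWord.comp hh hf1 rfl
    have w2 : HWord ie te Γ i (te e2) (⇑f2 ∘ h) := HWord.comp hh hf2 hie.symm
    unfold kerJulia
    rw [if_neg]
    · ext y
      simp only [Set.mem_iInter, Set.mem_empty_iff_false, iff_false]
      intro hy
      have h1 := hy (te e1) (⇑f1 ∘ h) w1
      have h2 := hy (te e2) (⇑f2 ∘ h) w2
      have : h y ∈ (⇑f1 ⁻¹' Julia ie te Γ (te e1) ∩ ⇑f2 ⁻¹' Julia ie te Γ (te e2)) :=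
        ⟨h1, h2⟩
      rw [hsep'] at this
      exact this
    · push_neg
      exact ⟨te e1, ⟨⇑f1 ∘ h, w1⟩⟩
end

section
/- Let S be a GDMS, σ the left shift on the space X(S) of admissible infinite sequences, and f̃(ξ,y) = (σ(ξ), γ₁(y)) the associated skew product on X(S) × Y, where ξ = (γ_n,e_n)_{n∈ℕ}. Then for every ξ ∈ X(S), J_ξ ⊆ γ₁⁻¹(J_{σ(ξ)}), with equality when γ₁ is an open map; consequently, defining J̃(f̃) as the closure of ⋃_{ξ∈X(S)} {ξ}×J_ξ, one has J̃(f̃) ⊆ f̃⁻¹(J̃(f̃)), with equality if Γ_e consists of open maps for every e ∈ E. -/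
variable {Y V E : Type*} [UniformSpace Y]

/-- The composition `γ_{n+1,1} = γ_{n+1} ∘ ⋯ ∘ γ_1` of the first `n+1` maps of a
sequence (indexed from `0`). -/
def comps {Y : Type*} [TopologicalSpace Y] (γ : ℕ → C(Y, Y)) : ℕ → Y → Y
  | 0 => ⇑(γ 0)
  | n + 1 => ⇑(γ (n + 1)) ∘ comps γ n

/-- The set `X(S)` of admissible infinite sequences `ξ = (γ_n, e_n)_{n ∈ ℕ}`:
`γ_n ∈ Γ e_n` and `t(e_n) = i(e_{n+1})` for all `n`. -/
def Adm {Y V E : Type*} [UniformSpace Y] (ie te : E → V) (Γ : E → Set C(Y, Y)) :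
    Set (ℕ → C(Y, Y) × E) :=
  {ξ | (∀ n, (ξ n).1 ∈ Γ ((ξ n).2)) ∧ ∀ n, te ((ξ n).2) = ie ((ξ (n + 1)).2)}

/-- The left shift map `σ : X(S) → X(S)`. -/
def shiftAdm {Y V E : Type*} [UniformSpace Y] (ie te : E → V) (Γ : E → Set C(Y, Y))
    (ξ : Adm ie te Γ) : Adm ie te Γ :=
  ⟨fun n => ξ.1 (n + 1), ⟨fun n => ξ.2.1 (n + 1), fun n => ξ.2.2 (n + 1)⟩⟩

/-- The non-autonomous Julia set `J_ξ` of a sequence `ξ = (γ_n, e_n)`. -/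
def Jseq {Y E : Type*} [UniformSpace Y] (ξ : ℕ → C(Y, Y) × E) : Set Y :=
  JuliaOf {g : Y → Y | ∃ n, g = comps (fun k => (ξ k).1) n}

/-- The skew product map `f̃(ξ, y) = (σ ξ, γ_1(y))` associated with the GDMS. -/
def skewProd {Y V E : Type*} [UniformSpace Y] (ie te : E → V) (Γ : E → Set C(Y, Y))
    (p : Adm ie te Γ × Y) : Adm ie te Γ × Y :=
  (shiftAdm ie te Γ p.1, ((p.1 : ℕ → C(Y, Y) × E) 0).1 p.2)

/-- The skew product Julia set `J̃(f̃) = closure (⋃_ξ {ξ} × J_ξ)` in `X(S) × Y`. -/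
def skewJulia {Y V E : Type*} [UniformSpace Y] [TopologicalSpace E]
    (ie te : E → V) (Γ : E → Set C(Y, Y)) : Set (Adm ie te Γ × Y) :=
  closure (⋃ ξ : Adm ie te Γ, ({ξ} : Set (Adm ie te Γ)) ×ˢ Jseq ξ.val)


section Stmt12Aux

open Filter Topology Set

variable {Y E : Type*} [UniformSpace Y]

lemma comps_succ_eq (γ : ℕ → C(Y, Y)) : ∀ n,
    comps γ (n + 1) = comps (fun k => γ (k + 1)) n ∘ ⇑(γ 0)
  | 0 => rfl
  | n + 1 => by
      show ⇑(γ (n + 2)) ∘ comps γ (n + 1) = _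
      rw [comps_succ_eq γ n]
      rfl

lemma equi_cons {γ : ℕ → C(Y, Y)} {z : Y}
    (h : EquicontinuousAt
      (fun f : {g : Y → Y | ∃ n, g = comps (fun k => γ (k + 1)) n} => (f : Y → Y)) (γ 0 z)) :
    EquicontinuousAt (fun f : {g : Y → Y | ∃ n, g = comps γ n} => (f : Y → Y)) z := by
  intro U hU
  have h2 : ∀ᶠ x in nhds z,
      ∀ f : {g : Y → Y | ∃ n, g = comps (fun k => γ (k + 1)) n},
        ((f : Y → Y) (γ 0 z), (f : Y → Y) (γ 0 x)) ∈ U :=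
    ((γ 0).continuous.continuousAt).eventually (h U hU)
  have h3 : ∀ᶠ x in nhds z, ((γ 0) z, (γ 0) x) ∈ U :=
    (γ 0).continuous.continuousAt (mem_nhds_left (γ 0 z) hU)
  filter_upwards [h2, h3] with x hx hx0
  rintro ⟨f, n, rfl⟩
  cases n with
  | zero => exact hx0
  | succ n =>
      show (comps γ (n + 1) z, comps γ (n + 1) x) ∈ U
      rw [comps_succ_eq]
      exact hx ⟨comps (fun k => γ (k + 1)) n, n, rfl⟩

lemma jseq_subset (ξ : ℕ → C(Y, Y) × E) :
    Jseq ξ ⊆ ⇑((ξ 0).1) ⁻¹' Jseq (fun n => ξ (n + 1)) := by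
  intro y hy
  rintro ⟨U, hU, hEq⟩
  exact hy ⟨⇑((ξ 0).1) ⁻¹' U, ((ξ 0).1).continuous.continuousAt.preimage_mem_nhds hU,
    fun z hz => equi_cons (γ := fun k => (ξ k).1) (hEq _ hz)⟩

lemma jseq_eq (ξ : ℕ → C(Y, Y) × E) (ho : IsOpenMap ⇑((ξ 0).1)) :
    Jseq ξ = ⇑((ξ 0).1) ⁻¹' Jseq (fun n => ξ (n + 1)) := by
  refine (jseq_subset ξ).antisymm fun y hy => ?_
  rintro ⟨U, hU, hEq⟩
  obtain ⟨U', hU'sub, hU'open, hyU'⟩ := mem_nhds_iff.mp hU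
  refine hy ⟨⇑((ξ 0).1) '' U', ho.image_mem_nhds (hU'open.mem_nhds hyU'), ?_⟩
  rintro _ ⟨z, hz, rfl⟩ V hV
  have hS : {x | ∀ f : {g : Y → Y | ∃ n, g = comps (fun k => (ξ k).1) n},
      ((f : Y → Y) z, (f : Y → Y) x) ∈ V} ∈ nhds z := hEq z (hU'sub hz) V hV
  obtain ⟨S', hS'sub, hS'open, hzS'⟩ := mem_nhds_iff.mp hS
  refine Filter.mem_of_superset (ho.image_mem_nhds (hS'open.mem_nhds hzS')) ?_
  rintro _ ⟨x, hx, rfl⟩ ⟨f, n, rfl⟩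
  show ((comps (fun k => (ξ (k + 1)).1) n ∘ ⇑((ξ 0).1)) z,
    (comps (fun k => (ξ (k + 1)).1) n ∘ ⇑((ξ 0).1)) x) ∈ V
  rw [← comps_succ_eq (fun k => (ξ k).1) n]
  exact hS'sub hx ⟨comps (fun k => (ξ k).1) (n + 1), n + 1, rfl⟩

/-- Prepending an element to a sequence. -/
def consSeq {P : Type*} (a : P) (s : ℕ → P) : ℕ → P
  | 0 => a
  | n + 1 => s n

lemma continuous_consSeq {P : Type*} [TopologicalSpace P] (a : P) :
    Continuous fun s : ℕ → P => consSeq a s := by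
  refine continuous_pi fun n => ?_
  cases n with
  | zero => exact continuous_const
  | succ n => exact continuous_apply n

end Stmt12Aux

/-- For every `ξ ∈ X(S)`, `J_ξ ⊆ γ_1⁻¹(J_{σ ξ})`, with equality when
`γ_1` is an open map; consequently `J̃(f̃) ⊆ f̃⁻¹(J̃(f̃))`, with equality if every `Γ e`
consists of open maps. -/
theorem stmt12 {Y V E : Type*} [MetricSpace Y] [CompactSpace Y] [Fintype V] [Fintype E]
    [TopologicalSpace E] [DiscreteTopology E]
    (ie te : E → V) (Γ : E → Set C(Y, Y))
    (hne : ∀ e, (Γ e).Nonempty) :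
    (∀ ξ : Adm ie te Γ, Jseq ξ.val
        ⊆ (((ξ : ℕ → C(Y, Y) × E) 0).1 : Y → Y) ⁻¹' Jseq (shiftAdm ie te Γ ξ).val) ∧
    (∀ ξ : Adm ie te Γ, IsOpenMap ((((ξ : ℕ → C(Y, Y) × E) 0).1 : Y → Y)) →
        Jseq ξ.val
          = (((ξ : ℕ → C(Y, Y) × E) 0).1 : Y → Y) ⁻¹' Jseq (shiftAdm ie te Γ ξ).val) ∧
    skewJulia ie te Γ ⊆ skewProd ie te Γ ⁻¹' skewJulia ie te Γ ∧
    ((∀ e, ∀ f ∈ Γ e, IsOpenMap (f : Y → Y)) →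
      skewJulia ie te Γ = skewProd ie te Γ ⁻¹' skewJulia ie te Γ) := by
  have hA1 : ∀ ξ : Adm ie te Γ, Jseq ξ.val
      ⊆ (((ξ : ℕ → C(Y, Y) × E) 0).1 : Y → Y) ⁻¹' Jseq (shiftAdm ie te Γ ξ).val :=
    fun ξ => jseq_subset ξ.val
  have hA2 : ∀ ξ : Adm ie te Γ, IsOpenMap ((((ξ : ℕ → C(Y, Y) × E) 0).1 : Y → Y)) →
      Jseq ξ.val = (((ξ : ℕ → C(Y, Y) × E) 0).1 : Y → Y) ⁻¹' Jseq (shiftAdm ie te Γ ξ).val :=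
    fun ξ ho => jseq_eq ξ.val ho
  have hcont : Continuous (skewProd ie te Γ) := by
    have h1 : Continuous fun p : Adm ie te Γ × Y => (p.1 : ℕ → C(Y, Y) × E) :=
      continuous_subtype_val.comp continuous_fst
    refine Continuous.prodMk ?_ ?_
    · exact Continuous.subtype_mk (continuous_pi fun n => (continuous_apply (n + 1)).comp h1) _
    · exact ContinuousEval.continuous_eval.comp
        ((((continuous_apply 0).comp h1).fst).prodMk continuous_snd)
  have hsub : skewJulia ie te Γ ⊆ skewProd ie te Γ ⁻¹' skewJulia ie te Γ := by
    refine closure_minimal ?_ (IsClosed.preimage hcont isClosed_closure)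
    intro p hp
    obtain ⟨ξ, h1, hy⟩ := Set.mem_iUnion.mp hp
    have hξ : p.1 = ξ := h1
    subst hξ
    exact subset_closure (Set.mem_iUnion.mpr ⟨shiftAdm ie te Γ p.1, rfl, hA1 p.1 hy⟩)
  refine ⟨hA1, hA2, hsub, fun hΓo => Set.Subset.antisymm hsub ?_⟩
  intro p hp
  rw [Set.mem_preimage] at hp
  show p ∈ closure _
  rw [mem_closure_iff]
  intro O hO hpO
  obtain ⟨O1, O2, hO1, hO2, hp1, hp2, hsubO⟩ := isOpen_prod_iff.mp hO p.1 p.2 hpO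
  obtain ⟨W, hW, hWeq⟩ := isOpen_induced_iff.mp hO1
  have hp1W : (p.1 : ℕ → C(Y, Y) × E) ∈ W := by rw [← hWeq] at hp1; exact hp1
  -- the first map of p.1 and its openness
  have hγo : IsOpenMap ((((p.1 : ℕ → C(Y, Y) × E)) 0).1 : Y → Y) :=
    hΓo _ _ (p.1.2.1 0)
  -- the open set W' around σ(p.1)
  set a : C(Y, Y) × E := (p.1 : ℕ → C(Y, Y) × E) 0 with ha
  set W' : Set (ℕ → C(Y, Y) × E) :=
    (fun s => consSeq a s) ⁻¹' W ∩ {s | (s 0).2 = ((p.1 : ℕ → C(Y, Y) × E) 1).2} with hW'def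
  have hW' : IsOpen W' := by
    refine IsOpen.inter (hW.preimage (continuous_consSeq a)) ?_
    exact IsOpen.preimage ((continuous_apply 0).snd)
      (isOpen_discrete ({((p.1 : ℕ → C(Y, Y) × E) 1).2} : Set E))
  have hcons : consSeq a ((shiftAdm ie te Γ p.1).val) = (p.1 : ℕ → C(Y, Y) × E) := by
    funext n; cases n <;> rfl
  have hσW' : ((shiftAdm ie te Γ p.1).val) ∈ W' := by
    constructor
    · show consSeq a _ ∈ W
      rw [hcons]; exact hp1W
    · rfl
  -- apply closure membership of skewProd p to the open neighborhood (val ⁻¹' W') ×ˢ (γ0 '' O2)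
  have hnb : skewProd ie te Γ p ∈ (Subtype.val ⁻¹' W') ×ˢ ((a.1 : Y → Y) '' O2) :=
    ⟨hσW', ⟨p.2, hp2, rfl⟩⟩
  have hnbOpen : IsOpen ((Subtype.val ⁻¹' W' : Set (Adm ie te Γ)) ×ˢ ((a.1 : Y → Y) '' O2)) :=
    (hW'.preimage continuous_subtype_val).prod (hγo O2 hO2)
  obtain ⟨q, ⟨hq1, hq2⟩, hqA⟩ := mem_closure_iff.mp hp _ hnbOpen hnb
  obtain ⟨η', h1', hqJ⟩ := Set.mem_iUnion.mp hqA
  have hη' : q.1 = η' := h1'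
  subst hη'
  obtain ⟨z, hzO2, hz⟩ := hq2
  -- build the admissible sequence η = cons a q.1
  have hadm : consSeq a (q.1 : ℕ → C(Y, Y) × E) ∈ Adm ie te Γ := by
    constructor
    · intro n
      cases n with
      | zero => exact p.1.2.1 0
      | succ n => exact q.1.2.1 n
    · intro n
      cases n with
      | zero =>
          show te (a.2) = ie (((q.1 : ℕ → C(Y, Y) × E) 0).2)
          rw [hq1.2]
          exact p.1.2.2 0
      | succ n => exact q.1.2.2 n
  set η : Adm ie te Γ := ⟨consSeq a (q.1 : ℕ → C(Y, Y) × E), hadm⟩ with hηdef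
  have hηO1 : η ∈ O1 := by
    rw [← hWeq]
    exact hq1.1
  have hzJ : z ∈ Jseq η.val := by
    rw [show (η.val : ℕ → C(Y, Y) × E) = consSeq a (q.1 : ℕ → C(Y, Y) × E) from rfl]
    rw [jseq_eq _ (by exact hγo)]
    show (a.1 : Y → Y) z ∈ Jseq (fun n => (q.1 : ℕ → C(Y, Y) × E) n)
    rw [hz]
    exact hqJ
  exact ⟨(η, z), hsubO ⟨hηO1, hzO2⟩, Set.mem_iUnion.mpr ⟨η, rfl, hzJ⟩⟩
end
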